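/- arXiv:2210.13812 — 7 statements merged into one kernel-verified Lean document; each statement's English description precedes it below -/
import Mathlib

section
/- For integers a > b ≥ 0, the minimal addition chain length of 2^a + 2^b equals a + 1, i.e., ℓ(2^a + 2^b) = a + 1. -/
/-- An addition chain of length `r` for `n`, given by `a : ℕ → ℕ`. -/
def IsAdditionChain (r : ℕ) (a : ℕ → ℕ) (n : ℕ) : Prop :=
  a 0 = 1 ∧ a r = n ∧ (∀ k, k < r → a k < a (k + 1)) ∧
    ∀ k, 1 ≤ k → k ≤ r → ∃ i j, i < k ∧ j < k ∧ a k = a i + a j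

/-- Minimal length of an addition chain for `n`. -/
noncomputable def addLen (n : ℕ) : ℕ :=
  sInf {r | ∃ a : ℕ → ℕ, IsAdditionChain r a n}

/-!
Doubling `a` times and adding `2 ^ b` once gives a chain of length `a + 1`. Conversely, every
step of a chain at most doubles its largest element, so the `k`-th element is at most `2 ^ k`;
as `2 ^ a < 2 ^ a + 2 ^ b`, a chain for this number needs more than `a` steps.
-/

namespace IsAdditionChain

variable {r n : ℕ} {c : ℕ → ℕ}

theorem strictMonoOn (h : IsAdditionChain r c n) : StrictMonoOn c (Set.Iic r) :=
  strictMonoOn_Iic_of_lt_succ h.2.2.1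

theorem le_two_pow (h : IsAdditionChain r c n) : ∀ k ≤ r, c k ≤ 2 ^ k := by
  intro k
  induction k with
  | zero => intro _; simp [h.1]
  | succ k ih =>
    intro hk
    obtain ⟨i, j, hi, hj, hsum⟩ := h.2.2.2 (k + 1) (Nat.succ_pos k) hk
    have hle : ∀ l < k + 1, c l ≤ c k := fun l hl =>
      h.strictMonoOn.monotoneOn (Set.mem_Iic.2 (by omega)) (Set.mem_Iic.2 (by omega)) (by omega)
    have hck := ih (by omega)
    calc c (k + 1) = c i + c j := hsum
      _ ≤ 2 ^ k + 2 ^ k := add_le_add ((hle i hi).trans hck) ((hle j hj).trans hck)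
      _ = 2 ^ (k + 1) := by ring

theorem lt_length_of_two_pow_lt (h : IsAdditionChain r c n) {m : ℕ} (hm : 2 ^ m < n) : m < r :=
  (Nat.pow_lt_pow_iff_right (by norm_num)).1 (hm.trans_le (h.2.1 ▸ h.le_two_pow r le_rfl))

end IsAdditionChain

theorem isAdditionChain_two_pow_add_two_pow {a b : ℕ} (hba : b ≤ a) :
    IsAdditionChain (a + 1) (fun k => if k ≤ a then 2 ^ k else 2 ^ a + 2 ^ b) (2 ^ a + 2 ^ b) := by
  refine ⟨by simp, by simp, fun k hk => ?_, fun k hk1 hk2 => ?_⟩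
  · rcases Nat.lt_or_ge k a with hka | hka
    · simp only [hka.le, show k + 1 ≤ a from hka, if_true]
      exact Nat.pow_lt_pow_right one_lt_two k.lt_succ_self
    · obtain rfl : k = a := by omega
      simp only [le_refl, Nat.not_succ_le_self, if_true, if_false]
      exact Nat.lt_add_of_pos_right (Nat.two_pow_pos b)
  · rcases Nat.lt_or_ge a k with hka | hka
    · obtain rfl : k = a + 1 := by omega
      exact ⟨a, b, a.lt_succ_self, by omega, by simp [hba]⟩
    · refine ⟨k - 1, k - 1, by omega, by omega, ?_⟩
      obtain ⟨l, rfl⟩ : ∃ l, k = l + 1 := ⟨k - 1, by omega⟩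
      simp only [hka, show l ≤ a by omega, if_true, Nat.add_sub_cancel]
      ring

theorem addLen_le {r n : ℕ} {c : ℕ → ℕ} (h : IsAdditionChain r c n) : addLen n ≤ r :=
  Nat.sInf_le ⟨c, h⟩

theorem exists_isAdditionChain_addLen {r n : ℕ} {c : ℕ → ℕ} (h : IsAdditionChain r c n) :
    ∃ c', IsAdditionChain (addLen n) c' n :=
  Nat.sInf_mem (s := {r | ∃ a, IsAdditionChain r a n}) ⟨r, c, h⟩

theorem stmt1 : ∀ a b : ℕ, b < a → addLen (2 ^ a + 2 ^ b) = a + 1 := by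
  intro a b hba
  have hchain := isAdditionChain_two_pow_add_two_pow hba.le
  obtain ⟨c, hc⟩ := exists_isAdditionChain_addLen hchain
  exact le_antisymm (addLen_le hchain)
    (hc.lt_length_of_two_pow_lt (Nat.lt_add_of_pos_right (Nat.two_pow_pos b)))
end

section
/- If a positive integer n satisfies ℓ(2^n − 1) ≤ ℓ(n) + n − 1 and ℓ(2n) = ℓ(n) + 1, then ℓ(2^{2n} − 1) ≤ ℓ(2n) + 2n − 1. -/
lemma chain_exists (m : ℕ) (hm : 1 ≤ m) :
    IsAdditionChain (m - 1) (fun k => k + 1) m := by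
  refine ⟨rfl, by show m - 1 + 1 = m; omega,
    fun k hk => by show k + 1 < k + 1 + 1; omega,
    fun k hk1 hk2 => ⟨k - 1, 0, by omega, by omega, by
      show k + 1 = (k - 1 + 1) + (0 + 1); omega⟩⟩

lemma addLen_key (n : ℕ) (hn : 1 ≤ n) :
    addLen (2 ^ (2 * n) - 1) ≤ addLen (2 ^ n - 1) + n + 1 := by
  have hp : 1 ≤ 2 ^ n := Nat.one_le_two_pow
  have hp2 : 2 ≤ 2 ^ n := by
    calc 2 = 2 ^ 1 := rfl
    _ ≤ 2 ^ n := Nat.pow_le_pow_right (by norm_num) hn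
  set m := 2 ^ n - 1 with hmdef
  have hm : 1 ≤ m := by omega
  have hne : {r | ∃ a : ℕ → ℕ, IsAdditionChain r a m}.Nonempty :=
    ⟨m - 1, fun k => k + 1, chain_exists m hm⟩
  have hachain : ∃ a, IsAdditionChain (addLen m) a m := Nat.sInf_mem hne
  obtain ⟨a, ha0, har, hmono, hsum⟩ := hachain
  set r := addLen m with hrdef
  -- target value
  have htarget : m * 2 ^ n + m = 2 ^ (2 * n) - 1 := by
    have h2n : 2 ^ (2 * n) = 2 ^ n * 2 ^ n := by rw [two_mul, pow_add]
    have hs : (2 ^ n - 1) * 2 ^ n = 2 ^ n * 2 ^ n - 1 * 2 ^ n := Nat.sub_mul _ _ _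
    have hle : 2 ^ n ≤ 2 ^ n * 2 ^ n := Nat.le_mul_of_pos_left _ (by omega)
    rw [hmdef, h2n]
    omega
  set b : ℕ → ℕ := fun k =>
    if k ≤ r then a k else if k ≤ r + n then m * 2 ^ (k - r) else m * 2 ^ n + m with hbdef
  have hbr : ∀ i, i ≤ n → b (r + i) = m * 2 ^ i := by
    intro i hi
    rcases Nat.eq_zero_or_pos i with h | h
    · subst h; simp [hbdef, har]
    · have h1 : ¬ (r + i ≤ r) := by omega
      have h2 : r + i ≤ r + n := by omega
      simp [hbdef, h1, h2]
  have hchain : IsAdditionChain (r + n + 1) b (2 ^ (2 * n) - 1) := by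
    refine ⟨?_, ?_, ?_, ?_⟩
    · simp [hbdef, ha0]
    · have h1 : ¬ (r + n + 1 ≤ r) := by omega
      have h2 : ¬ (r + n + 1 ≤ r + n) := by omega
      simp [hbdef, h1, h2, htarget]
    · intro k hk
      rcases lt_or_ge k r with hkr | hkr
      · have h1 : k ≤ r := by omega
        have h2 : k + 1 ≤ r := by omega
        simpa [hbdef, h1, h2] using hmono k hkr
      · obtain ⟨i, rfl⟩ := Nat.exists_eq_add_of_le hkr
        rcases lt_or_ge i n with hin | hin
        · rw [hbr i (by omega), show r + i + 1 = r + (i + 1) by ring,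
            hbr (i + 1) (by omega)]
          have h0 : 0 < m * 2 ^ i := by positivity
          rw [pow_succ]
          nlinarith
        · have hi : i = n := by omega
          rw [hi, hbr n le_rfl]
          have h1 : ¬ (r + n + 1 ≤ r) := by omega
          have h2 : ¬ (r + n + 1 ≤ r + n) := by omega
          simp only [hbdef, h1, h2, if_false]
          omega
    · intro k hk1 hk2
      rcases le_or_gt k r with hkr | hkr
      · obtain ⟨i, j, hi, hj, hij⟩ := hsum k hk1 hkr
        exact ⟨i, j, hi, hj, by
          have h2 : i ≤ r := by omega
          have h3 : j ≤ r := by omega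
          simp [hbdef, hkr, h2, h3, hij]⟩
      · rcases le_or_gt k (r + n) with hkn | hkn
        · refine ⟨k - 1, k - 1, by omega, by omega, ?_⟩
          have v1 : b k = m * 2 ^ (k - r) := by
            have h := hbr (k - r) (by omega)
            rwa [show r + (k - r) = k by omega] at h
          have v2 : b (k - 1) = m * 2 ^ (k - 1 - r) := by
            have h := hbr (k - 1 - r) (by omega)
            rwa [show r + (k - 1 - r) = k - 1 by omega] at h
          rw [v1, v2, show k - r = (k - 1 - r) + 1 by omega, pow_succ]
          ring
        · have hk : k = r + n + 1 := by omega
          rw [hk]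
          refine ⟨r + n, r, by omega, by omega, ?_⟩
          have h1 : ¬ (r + n + 1 ≤ r) := by omega
          have h2 : ¬ (r + n + 1 ≤ r + n) := by omega
          rw [hbr n le_rfl]
          simp [hbdef, h1, h2, har]
  exact Nat.sInf_le ⟨b, hchain⟩

theorem stmt4 (n : ℕ) (hn : 0 < n)
    (h1 : addLen (2 ^ n - 1) ≤ addLen n + n - 1)
    (h2 : addLen (2 * n) = addLen n + 1) :
    addLen (2 ^ (2 * n) - 1) ≤ addLen (2 * n) + 2 * n - 1 := by
  have key := addLen_key n hn
  omega
end

section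
/- Let A > B be positive integers. If there exists an addition chain for 2^A − 1 of length L that contains 2^B − 1 as an element, then ℓ(2^{A+B} − 1) ≤ L + B + 1. -/
/-!
Double the last element of the chain for `2^A - 1` exactly `B` times, reaching
`2^B (2^A - 1)` in `L + B` steps, then add the element `2^B - 1` already in the chain:
`2^B (2^A - 1) + (2^B - 1) = 2^(A+B) - 1`.
-/

def chainSnoc (a : ℕ → ℕ) (r m : ℕ) : ℕ → ℕ := fun k => if k ≤ r then a k else m

theorem chainSnoc_of_le {a : ℕ → ℕ} {r m k : ℕ} (hk : k ≤ r) : chainSnoc a r m k = a k :=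
  if_pos hk

theorem chainSnoc_of_lt {a : ℕ → ℕ} {r m k : ℕ} (hk : r < k) : chainSnoc a r m k = m :=
  if_neg (Nat.not_le.mpr hk)

namespace IsAdditionChain

variable {r n : ℕ} {a : ℕ → ℕ}

theorem addLen_le (h : IsAdditionChain r a n) : addLen n ≤ r :=
  Nat.sInf_le ⟨a, h⟩

theorem snoc (h : IsAdditionChain r a n) {i j : ℕ} (hi : i ≤ r) (hj : j ≤ r)
    (hlt : n < a i + a j) :
    IsAdditionChain (r + 1) (chainSnoc a r (a i + a j)) (a i + a j) := by
  obtain ⟨h0, hr, hmono, hsum⟩ := h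
  refine ⟨by rw [chainSnoc_of_le r.zero_le, h0], chainSnoc_of_lt r.lt_succ_self, ?_, ?_⟩
  · intro k hk
    rcases Nat.lt_succ_iff_lt_or_eq.mp hk with hkr | rfl
    · rw [chainSnoc_of_le hkr.le, chainSnoc_of_le hkr]
      exact hmono k hkr
    · rw [chainSnoc_of_le le_rfl, chainSnoc_of_lt k.lt_succ_self, hr]
      exact hlt
  · intro k hk1 hk2
    rcases Nat.lt_or_ge r k with hrk | hkr
    · refine ⟨i, j, by omega, by omega, ?_⟩
      rw [chainSnoc_of_lt hrk, chainSnoc_of_le hi, chainSnoc_of_le hj]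
    · obtain ⟨i', j', hi', hj', hk⟩ := hsum k hk1 hkr
      refine ⟨i', j', hi', hj', ?_⟩
      rw [chainSnoc_of_le hkr, chainSnoc_of_le (by omega), chainSnoc_of_le (by omega), hk]

theorem one_le (h : IsAdditionChain r a n) : 1 ≤ n := by
  obtain ⟨h0, hr, hmono, -⟩ := h
  have : ∀ k ≤ r, 1 ≤ a k := by
    intro k hk
    induction k with
    | zero => exact h0.ge
    | succ k ih => exact (ih (by omega)).trans (hmono k hk).le
  exact hr ▸ this r le_rfl

theorem exists_double_pow (h : IsAdditionChain r a n) (s : ℕ) :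
    ∃ b : ℕ → ℕ, IsAdditionChain (r + s) b (2 ^ s * n) ∧ ∀ k ≤ r, b k = a k := by
  induction s with
  | zero => exact ⟨a, by simpa using h, fun _ _ => rfl⟩
  | succ s ih =>
    obtain ⟨b, hb, hba⟩ := ih
    have hlast : b (r + s) = 2 ^ s * n := hb.2.1
    have hdouble : b (r + s) + b (r + s) = 2 ^ (s + 1) * n := by rw [hlast]; ring
    refine ⟨chainSnoc b (r + s) (b (r + s) + b (r + s)), ?_, ?_⟩
    · rw [← hdouble]
      exact hb.snoc le_rfl le_rfl (by have := hb.one_le; omega)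
    · intro k hk
      rw [chainSnoc_of_le (by omega), hba k hk]

end IsAdditionChain

theorem two_pow_add_sub_one (A B : ℕ) :
    2 ^ (A + B) - 1 = 2 ^ B * (2 ^ A - 1) + (2 ^ B - 1) := by
  have hA := Nat.one_le_two_pow (n := A)
  have hB := Nat.one_le_two_pow (n := B)
  have hAB := Nat.one_le_two_pow (n := A + B)
  zify [hA, hB, hAB]
  ring

theorem stmt6_general (A B L : ℕ) (hB : 0 < B)
    (h : ∃ a : ℕ → ℕ, IsAdditionChain L a (2 ^ A - 1) ∧ ∃ i ≤ L, a i = 2 ^ B - 1) :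
    addLen (2 ^ (A + B) - 1) ≤ L + B + 1 := by
  obtain ⟨a, ha, i, hiL, hi⟩ := h
  obtain ⟨b, hb, hba⟩ := ha.exists_double_pow B
  have hbi : b i = 2 ^ B - 1 := (hba i hiL).trans hi
  have hlast : b (L + B) = 2 ^ B * (2 ^ A - 1) := hb.2.1
  have hsum : b (L + B) + b i = 2 ^ (A + B) - 1 := by
    rw [hlast, hbi, two_pow_add_sub_one]
  have hpos : 0 < b i := by
    rw [hbi]
    exact Nat.sub_pos_of_lt (Nat.one_lt_two_pow hB.ne')
  rw [← hsum]
  exact (hb.snoc le_rfl (by omega) (by omega)).addLen_le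

theorem stmt6 (A B L : ℕ) (hB : 0 < B) (hAB : B < A)
    (h : ∃ a : ℕ → ℕ, IsAdditionChain L a (2 ^ A - 1) ∧ ∃ i ≤ L, a i = 2 ^ B - 1) :
    addLen (2 ^ (A + B) - 1) ≤ L + B + 1 :=
  stmt6_general A B L hB h
end

section
/- For every positive integer m, the minimal addition chain length of c_1 = 5·2^{m+2} + 3 equals m + 6. -/
namespace AddChainAux

variable {r : ℕ} {a : ℕ → ℕ} {n : ℕ}

lemma mono (h : IsAdditionChain r a n) : ∀ i k, i ≤ k → k ≤ r → a i ≤ a k := by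
  intro i k hik hkr
  induction k with
  | zero => simp [Nat.le_zero.mp hik]
  | succ k ih =>
    rcases Nat.eq_or_lt_of_le hik with rfl | hlt
    · rfl
    · exact le_trans (ih (Nat.lt_succ_iff.mp hlt) (le_trans (Nat.le_succ k) hkr))
        (le_of_lt (h.2.2.1 k (lt_of_lt_of_le (Nat.lt_succ_self k) hkr)))

lemma ub (h : IsAdditionChain r a n) : ∀ k, k ≤ r → a k ≤ 2 ^ k := by
  intro k
  induction k with
  | zero => intro _; simp [h.1]
  | succ k ih =>
    intro hkr
    obtain ⟨i, j, hi, hj, heq⟩ := h.2.2.2 (k+1) (by omega) hkr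
    have h1 : a i ≤ a k := mono h i k (by omega) (by omega)
    have h2 : a j ≤ a k := mono h j k (by omega) (by omega)
    have h3 : a k ≤ 2 ^ k := ih (by omega)
    have : (2:ℕ)^(k+1) = 2^k + 2^k := by ring
    omega

lemma double (h : IsAdditionChain r a n) : ∀ k, k + 1 ≤ r → a (k+1) ≤ 2 * a k := by
  intro k hkr
  obtain ⟨i, j, hi, hj, heq⟩ := h.2.2.2 (k+1) (by omega) hkr
  have h1 : a i ≤ a k := mono h i k (by omega) (by omega)
  have h2 : a j ≤ a k := mono h j k (by omega) (by omega)
  omega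

lemma expand (h : IsAdditionChain r a n) : ∀ d k, k + d = r → a r ≤ 2 ^ d * a k := by
  intro d
  induction d with
  | zero => intro k hk; subst hk; simp
  | succ d ih =>
    intro k hk
    have h1 : a r ≤ 2 ^ d * a (k+1) := ih (k+1) (by omega)
    have h2 : a (k+1) ≤ 2 * a k := double h k (by omega)
    calc a r ≤ 2 ^ d * a (k+1) := h1
      _ ≤ 2 ^ d * (2 * a k) := Nat.mul_le_mul_left _ h2
      _ = 2 ^ (d+1) * a k := by ring

lemma lb (h : IsAdditionChain r a n) (hn : 2 ^ (r-1) < a r) :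
    ∀ k, k ≤ r → 2 ^ k < 2 * a k := by
  intro k hkr
  have hr1 : 1 ≤ r := by
    by_contra h0
    have : r = 0 := by omega
    subst this
    simp [h.1] at hn
  have he : a r ≤ 2 ^ (r - k) * a k := expand h (r - k) k (by omega)
  have hP : 2 ^ (r - 1) < 2 ^ (r - k) * a k := lt_of_lt_of_le hn he
  have key : 2 ^ (r - k) * 2 ^ k < 2 ^ (r - k) * (2 * a k) := by
    have h1 : 2 ^ (r - k) * 2 ^ k = 2 * 2 ^ (r - 1) := by
      rw [← pow_add, ← pow_succ']; congr 1; omega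
    rw [h1, show 2 ^ (r - k) * (2 * a k) = 2 * (2 ^ (r - k) * a k) by ring]
    exact mul_lt_mul_of_pos_left hP (by norm_num)
  exact Nat.lt_of_mul_lt_mul_left key

lemma prefix_pow (h : IsAdditionChain r a n) :
    ∀ k, k ≤ r → a k = 2 ^ k → ∀ i, i ≤ k → a i = 2 ^ i := by
  intro k
  induction k with
  | zero =>
    intro _ _ i hi
    have hi0 : i = 0 := Nat.le_zero.mp hi
    rw [hi0, pow_zero]; exact h.1
  | succ k ih =>
    intro hkr hak i hi
    have hk : a k = 2 ^ k := by
      have h1 : a (k+1) ≤ 2 * a k := double h k hkr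
      have h2 : a k ≤ 2 ^ k := ub h k (by omega)
      have h3 : (2:ℕ)^(k+1) = 2 * 2^k := by ring
      omega
    rcases Nat.eq_or_lt_of_le hi with rfl | hlt
    · exact hak
    · exact ih (by omega) hk i (by omega)


lemma form (h : IsAdditionChain r a n) (hn : 2 ^ (r-1) < a r) :
    ∀ k, 1 ≤ k → k ≤ r → ∃ f, f ≤ k - 1 ∧ a k = 2 ^ (k-1) + 2 ^ f := by
  intro k
  induction k using Nat.strong_induction_on with
  | _ k IH =>
  intro hk1 hkr
  obtain ⟨i, j, hi, hj, heq⟩ := h.2.2.2 k hk1 hkr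
  have hlbk : 2 ^ k < 2 * a k := lb h hn k hkr
  by_cases hk1' : k = 1
  · subst hk1'
    refine ⟨0, le_rfl, ?_⟩
    have h01 : a 0 < a 1 := h.2.2.1 0 (by omega)
    have hu : a 1 ≤ 2 ^ 1 := ub h 1 (by omega)
    have h0 : a 0 = 1 := h.1
    norm_num at hu ⊢
    omega
  -- k ≥ 2
  have hk2 : 2 ≤ k := by omega
  have hprev_ub : a (k-1) ≤ 2 ^ (k-1) := ub h (k-1) (by omega)
  have hbig : 2 ^ (k-1) < a k := by
    have hid : (2:ℕ) ^ k = 2 * 2 ^ (k-1) := by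
      rw [← pow_succ']; congr 1; omega
    omega
  by_cases hp : a (k-1) = 2 ^ (k-1)
  · have hall : ∀ i', i' ≤ k-1 → a i' = 2 ^ i' := prefix_pow h (k-1) (by omega) hp
    have hai : a i = 2 ^ i := hall i (by omega)
    have haj : a j = 2 ^ j := hall j (by omega)
    have hmax : i = k-1 ∨ j = k-1 := by
      by_contra hc
      push_neg at hc
      have h1 : 2 ^ i ≤ 2 ^ (k-2) := Nat.pow_le_pow_right (by norm_num) (by omega)
      have h2 : 2 ^ j ≤ 2 ^ (k-2) := Nat.pow_le_pow_right (by norm_num) (by omega)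
      have h3 : (2:ℕ) ^ (k-1) = 2 ^ (k-2) + 2 ^ (k-2) := by
        rw [show (2:ℕ) ^ (k-2) + 2 ^ (k-2) = 2 * 2 ^ (k-2) by ring, ← pow_succ']
        congr 1; omega
      omega
    rcases hmax with hm | hm
    · exact ⟨j, by omega, by rw [heq, hai, haj, hm]⟩
    · exact ⟨i, by omega, by rw [heq, hai, haj, hm]; omega⟩
  · -- a (k-1) < 2^(k-1)
    obtain ⟨e, he, hae⟩ := IH (k-1) (by omega) (by omega) (by omega)
    have hk3 : 3 ≤ k := by
      by_contra hc
      have hk2' : k = 2 := by omega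
      subst hk2'
      have he0 : e = 0 := by omega
      rw [he0] at hae
      apply hp
      have : a 1 = 2 := by simpa using hae
      simpa using this
    obtain ⟨l, rfl⟩ : ∃ l, k = l + 3 := ⟨k - 3, by omega⟩
    have hae2 : a (l+2) = 2 ^ (l+1) + 2 ^ e := hae
    have he2 : e ≤ l + 1 := by omega
    have hp2 : a (l+2) ≠ 2 ^ (l+2) := hp
    have p0 : (2:ℕ) ^ (l+1) = 2 * 2 ^ l := by ring
    have p2 : (2:ℕ) ^ (l+2) = 4 * 2 ^ l := by ring
    have p3 : (2:ℕ) ^ (l+3) = 8 * 2 ^ l := by ring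
    have hel : e ≤ l := by
      by_contra hc
      have hel1 : e = l + 1 := by omega
      rw [hel1] at hae2
      exact hp2 (by rw [hae2]; ring)
    have h2e : 2 ^ e ≤ 2 ^ l := Nat.pow_le_pow_right (by norm_num) hel
    obtain ⟨e', he', hae'⟩ := IH (l+1) (by omega) (by omega) (by omega)
    have hae'2 : a (l+1) = 2 ^ l + 2 ^ e' := hae'
    have hel' : e' ≤ l := by omega
    have h2e' : 2 ^ e' ≤ 2 ^ l := Nat.pow_le_pow_right (by norm_num) hel'
    have hbig2 : 2 ^ (l+2) < a (l+3) := hbig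
    have key : ∀ t, t < l + 3 → a (l+3) ≤ a t + a (l+2) → l + 1 ≤ t := by
      intro t ht hsum
      by_contra hc
      push_neg at hc
      have haut : a t ≤ 2 ^ t := ub h t (by omega)
      have h2t : 2 ^ t ≤ 2 ^ l := Nat.pow_le_pow_right (by norm_num) (by omega)
      omega
    have hprevle : ∀ t, t < l + 3 → a t ≤ a (l+2) := fun t ht =>
      mono h t (l+2) (by omega) (by omega)
    have hi1 : l + 1 ≤ i := by
      apply key i hi
      have := hprevle j hj
      omega
    have hj1 : l + 1 ≤ j := by
      apply key j hj
      have := hprevle i hi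
      omega
    have hic : i = l+1 ∨ i = l+2 := by omega
    have hjc : j = l+1 ∨ j = l+2 := by omega
    -- helper for the mixed case
    have mixed : a (l+3) = a (l+1) + a (l+2) →
        ∃ f, f ≤ l + 3 - 1 ∧ a (l+3) = 2 ^ (l+3-1) + 2 ^ f := by
      intro hmx
      have hcase : e = l ∨ e' = l := by
        by_contra hc
        push_neg at hc
        have c1 : 2 * 2 ^ e ≤ 2 ^ l := by
          calc 2 * 2 ^ e = 2 ^ (e+1) := by ring
            _ ≤ 2 ^ l := Nat.pow_le_pow_right (by norm_num) (by omega)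
        have c2 : 2 * 2 ^ e' ≤ 2 ^ l := by
          calc 2 * 2 ^ e' = 2 ^ (e'+1) := by ring
            _ ≤ 2 ^ l := Nat.pow_le_pow_right (by norm_num) (by omega)
        omega
      rcases hcase with hcl | hcl
    -- e = l
      · refine ⟨e', by omega, ?_⟩
        rw [hcl] at hae2
        have g : (2:ℕ) ^ (l+3-1) = 4 * 2 ^ l := p2
        omega
      · refine ⟨e, by omega, ?_⟩
        rw [hcl] at hae'2
        have g : (2:ℕ) ^ (l+3-1) = 4 * 2 ^ l := p2
        omega
    rcases hic with hic | hic <;> rcases hjc with hjc | hjc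
    · -- i = j = l+1 : impossible
      rw [hic, hjc] at heq
      omega
    · rw [hic, hjc] at heq
      exact mixed heq
    · rw [hic, hjc] at heq
      exact mixed (by omega)
    · -- i = j = l+2 : doubling
      rw [hic, hjc] at heq
      refine ⟨e + 1, by omega, ?_⟩
      have q : (2:ℕ) ^ (e+1) = 2 * 2 ^ e := by ring
      have g : (2:ℕ) ^ (l+3-1) = 4 * 2 ^ l := p2
      omega


def ch (m : ℕ) (k : ℕ) : ℕ :=
  if k = 0 then 1 else if k = 1 then 2 else if k = 2 then 3 else
  if k ≤ m + 5 then 5 * 2 ^ (k - 3) else 5 * 2 ^ (m + 2) + 3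

lemma ch_mid (m : ℕ) {k : ℕ} (h3 : 3 ≤ k) (h5 : k ≤ m + 5) :
    ch m k = 5 * 2 ^ (k - 3) := by
  unfold ch
  rw [if_neg (by omega), if_neg (by omega), if_neg (by omega), if_pos h5]

lemma ch_last (m : ℕ) (hm : 0 < m) : ch m (m + 6) = 5 * 2 ^ (m + 2) + 3 := by
  unfold ch
  rw [if_neg (by omega), if_neg (by omega), if_neg (by omega), if_neg (by omega)]

lemma ch_chain (m : ℕ) (hm : 0 < m) :
    IsAdditionChain (m + 6) (ch m) (5 * 2 ^ (m + 2) + 3) := by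
  have h0 : ch m 0 = 1 := rfl
  have h1 : ch m 1 = 2 := rfl
  have h2 : ch m 2 = 3 := rfl
  refine ⟨h0, ch_last m hm, ?_, ?_⟩
  · intro k hk
    rcases Nat.lt_or_ge k 3 with h3 | h3
    · interval_cases k
      · rw [h0, h1]; omega
      · rw [h1, h2]; omega
      · rw [h2, ch_mid m (by omega) (by omega)]
        have : (1:ℕ) ≤ 2 ^ (3 - 3) := Nat.one_le_two_pow
        omega
    · rcases Nat.lt_or_ge k (m + 5) with h5 | h5
      · rw [ch_mid m h3 (by omega), ch_mid m (by omega) (by omega)]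
        have : 2 ^ (k - 3) < 2 ^ (k + 1 - 3) :=
          Nat.pow_lt_pow_right (by norm_num) (by omega)
        omega
      · have hk5 : k = m + 5 := by omega
        subst hk5
        rw [ch_mid m (by omega) le_rfl,
          show m + 5 + 1 = m + 6 from rfl, ch_last m hm,
          show m + 5 - 3 = m + 2 from by omega]
        omega
  · intro k hk1 hkr
    rcases Nat.lt_or_ge k 4 with h4 | h4
    · interval_cases k
      · exact ⟨0, 0, by omega, by omega, by rw [h0, h1]⟩
      · exact ⟨0, 1, by omega, by omega, by rw [h0, h1, h2]⟩
      · exact ⟨1, 2, by omega, by omega, by rw [h1, h2, ch_mid m le_rfl (by omega)]; norm_num⟩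
    · rcases Nat.lt_or_ge k (m + 6) with h6 | h6
      · refine ⟨k - 1, k - 1, by omega, by omega, ?_⟩
        rw [ch_mid m (by omega) (by omega), ch_mid m (by omega) (by omega)]
        have : k - 3 = (k - 1 - 3) + 1 := by omega
        rw [this, pow_succ]
        ring
      · have hk6 : k = m + 6 := by omega
        subst hk6
        refine ⟨m + 5, 2, by omega, by omega, ?_⟩
        rw [ch_last m hm, h2, ch_mid m (by omega) le_rfl,
          show m + 5 - 3 = m + 2 from by omega]

end AddChainAux

theorem stmt8 (m : ℕ) (hm : 0 < m) : addLen (5 * 2 ^ (m + 2) + 3) = m + 6 := by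
  have hmem : (m + 6) ∈ {r | ∃ a : ℕ → ℕ, IsAdditionChain r a (5 * 2 ^ (m + 2) + 3)} :=
    ⟨AddChainAux.ch m, AddChainAux.ch_chain m hm⟩
  have p2 : (2:ℕ) ^ (m + 4) = 4 * 2 ^ (m + 2) := by ring
  apply le_antisymm
  · exact Nat.sInf_le hmem
  · apply le_csInf ⟨_, hmem⟩
    rintro r ⟨a, hc⟩
    by_contra hlt
    push_neg at hlt
    have har : a r = 5 * 2 ^ (m + 2) + 3 := hc.2.1
    have h2r : 5 * 2 ^ (m + 2) + 3 ≤ 2 ^ r := har ▸ AddChainAux.ub hc r le_rfl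
    have hpos : (1:ℕ) ≤ 2 ^ (m + 2) := Nat.one_le_two_pow
    have hrge : m + 5 ≤ r := by
      by_contra h'
      push_neg at h'
      have hle : 2 ^ r ≤ 2 ^ (m + 4) := Nat.pow_le_pow_right (by norm_num) (by omega)
      omega
    have hr : r = m + 5 := by omega
    subst hr
    have hn' : 2 ^ (m + 5 - 1) < a (m + 5) := by
      rw [har, show m + 5 - 1 = m + 4 from by omega]
      omega
    obtain ⟨f, hf, heqf⟩ := AddChainAux.form hc hn' (m + 5) (by omega) le_rfl
    rw [har, show m + 5 - 1 = m + 4 from by omega] at heqf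
    have h2f : 2 ^ f = 2 ^ (m + 2) + 3 := by omega
    rcases f with _ | g
    · simp at h2f
    · have q1 : (2:ℕ) ^ (g + 1) = 2 * 2 ^ g := by ring
      have q2 : (2:ℕ) ^ (m + 2) = 2 * 2 ^ (m + 1) := by ring
      omega
end

section
/- For every positive integer m, the minimal addition chain length of c_2 = 3·2^{m+1} + 1 equals m + 4. -/
lemma two_pow_split {k : ℕ} (h : 1 ≤ k) : (2:ℕ) ^ k = 2 ^ (k - 1) + 2 ^ (k - 1) := by
  conv_lhs => rw [show k = k - 1 + 1 by omega]
  rw [pow_succ]; ring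

lemma chain_mono {r : ℕ} {a : ℕ → ℕ} {n : ℕ} (h : IsAdditionChain r a n)
    {i j : ℕ} (hij : i ≤ j) (hjr : j ≤ r) : a i ≤ a j := by
  induction j with
  | zero => simp [Nat.le_zero.mp hij]
  | succ j ih =>
    rcases Nat.eq_or_lt_of_le hij with rfl | hlt
    · exact le_rfl
    · exact le_trans (ih (by omega) (by omega)) (le_of_lt (h.2.2.1 j (by omega)))

lemma chain_le_pow {r : ℕ} {a : ℕ → ℕ} {n : ℕ} (h : IsAdditionChain r a n) :
    ∀ k, k ≤ r → a k ≤ 2 ^ k := by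
  intro k
  induction k using Nat.strong_induction_on with
  | _ k ih =>
    intro hk
    rcases Nat.eq_zero_or_pos k with rfl | hk0
    · simp [h.1]
    · obtain ⟨i, j, hi, hj, hk'⟩ := h.2.2.2 k hk0 hk
      have h1 : a i ≤ 2 ^ i := ih i hi (by omega)
      have h2 : a j ≤ 2 ^ j := ih j hj (by omega)
      have h3 : (2:ℕ) ^ i ≤ 2 ^ (k-1) := Nat.pow_le_pow_right (by norm_num) (by omega)
      have h4 : (2:ℕ) ^ j ≤ 2 ^ (k-1) := Nat.pow_le_pow_right (by norm_num) (by omega)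
      have h5 : (2:ℕ) ^ k = 2 ^ (k-1) + 2 ^ (k-1) := two_pow_split (by omega)
      omega

lemma chain_lb {r : ℕ} {a : ℕ → ℕ} {n : ℕ} (h : IsAdditionChain r a n) :
    ∀ d, d ≤ r → n ≤ a (r - d) * 2 ^ d := by
  intro d
  induction d with
  | zero => simp [h.2.1]
  | succ d ih =>
    intro hd
    have h1 : n ≤ a (r - d) * 2 ^ d := ih (by omega)
    have h2 : a (r - d) ≤ 2 * a (r - d - 1) := by
      obtain ⟨i, j, hi, hj, he⟩ := h.2.2.2 (r - d) (by omega) (by omega)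
      have hmi := chain_mono h (show i ≤ r - d - 1 by omega) (by omega)
      have hmj := chain_mono h (show j ≤ r - d - 1 by omega) (by omega)
      omega
    have h3 : r - (d + 1) = r - d - 1 := by omega
    calc n ≤ a (r - d) * 2 ^ d := h1
      _ ≤ (2 * a (r - d - 1)) * 2 ^ d := Nat.mul_le_mul_right _ h2
      _ = a (r - (d + 1)) * 2 ^ (d + 1) := by rw [h3, pow_succ]; ring

lemma chain_gt {r : ℕ} {a : ℕ → ℕ} {n : ℕ} (h : IsAdditionChain r a n)
    (hn : 2 ^ (r - 1) < n) : ∀ k, 1 ≤ k → k ≤ r → 2 ^ (k - 1) < a k := by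
  intro k hk1 hkr
  have h1 : n ≤ a (r - (r - k)) * 2 ^ (r - k) := chain_lb h (r - k) (by omega)
  have h2 : r - (r - k) = k := by omega
  rw [h2] at h1
  have h3 : 2 ^ (r - 1) < a k * 2 ^ (r - k) := lt_of_lt_of_le hn h1
  have h4 : (2:ℕ) ^ (r - 1) = 2 ^ (k - 1) * 2 ^ (r - k) := by
    rw [← pow_add]; congr 1; omega
  rw [h4] at h3
  exact Nat.lt_of_mul_lt_mul_right h3

lemma key {r : ℕ} {a : ℕ → ℕ} {n : ℕ} (h : IsAdditionChain r a n)
    (hn : 2 ^ (r - 1) < n) :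
    ∀ k, k ≤ r → (∀ j, j ≤ k → a j = 2 ^ j) ∨ ∃ e, e + 2 ≤ k ∧ a k = 2 ^ (k - 1) + 2 ^ e := by
  intro k
  induction k using Nat.strong_induction_on with
  | _ k ih =>
    intro hkr
    rcases Nat.eq_zero_or_pos k with rfl | hk0
    · left; intro j hj; interval_cases j; simpa using h.1
    obtain ⟨i, j, hi, hj, hk'⟩ := h.2.2.2 k hk0 hkr
    -- WLOG a i ≤ a j
    obtain ⟨i, j, hi, hj, hk', hij⟩ : ∃ i j, i < k ∧ j < k ∧ a k = a i + a j ∧ a i ≤ a j := by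
      rcases le_total (a i) (a j) with hle | hle
      · exact ⟨i, j, hi, hj, hk', hle⟩
      · exact ⟨j, i, hj, hi, by omega, hle⟩
    have hak : 2 ^ (k - 1) < a k := chain_gt h hn k hk0 hkr
    have haj : a j ≤ 2 ^ j := chain_le_pow h j (by omega)
    have hai : a i ≤ 2 ^ i := chain_le_pow h i (by omega)
    -- j must be k - 1
    have hjk : j = k - 1 := by
      by_contra hne
      have hjk2 : j ≤ k - 2 := by omega
      have : (2:ℕ) ^ j ≤ 2 ^ (k - 2) := Nat.pow_le_pow_right (by norm_num) hjk2
      rcases Nat.lt_or_ge k 2 with hk2 | hk2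
      · omega
      · have h2 : (2:ℕ) ^ (k - 1) = 2 ^ (k - 2) + 2 ^ (k - 2) := by
          have := two_pow_split (k := k - 1) (by omega)
          rwa [show k - 1 - 1 = k - 2 by omega] at this
        omega
    subst hjk
    rcases Nat.lt_or_ge k 2 with hk2 | hk2
    · -- k = 1 : a 1 = a 0 + a 0 = 2
      left
      intro jj hjj
      have hk1 : k = 1 := by omega
      subst hk1
      interval_cases jj
      · simpa using h.1
      · have h0 : a 0 = 1 := h.1
        simp at hk' ⊢
        omega
    -- k ≥ 2
    rcases ih (k - 1) (by omega) (by omega) with hA | ⟨f, hf, hB⟩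
    · -- all powers up to k-1
      have hjv : a (k - 1) = 2 ^ (k - 1) := hA (k - 1) le_rfl
      have hiv : a i = 2 ^ i := hA i (by omega)
      rcases Nat.eq_or_lt_of_le (show i ≤ k - 1 by omega) with rfl | hilt
      · -- doubling: a k = 2 ^ k
        left
        intro jj hjj
        rcases Nat.eq_or_lt_of_le hjj with rfl | hlt
        · rw [hk', hiv]; exact (two_pow_split (by omega)).symm
        · exact hA jj (by omega)
      · right
        exact ⟨i, by omega, by rw [hk', hiv, hjv]; ring⟩
    · -- a (k-1) = 2^(k-2) + 2^f, f + 2 ≤ k - 1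
      rw [show k - 1 - 1 = k - 2 by omega] at hB
      have hk3 : 3 ≤ k := by omega
      have hfk : f ≤ k - 3 := by omega
      have hp1 : (2:ℕ) ^ (k - 1) = 2 ^ (k - 2) + 2 ^ (k - 2) := by
        have := two_pow_split (k := k - 1) (by omega)
        rwa [show k - 1 - 1 = k - 2 by omega] at this
      have hp2 : (2:ℕ) ^ (k - 2) = 2 ^ (k - 3) + 2 ^ (k - 3) := by
        have := two_pow_split (k := k - 2) (by omega)
        rwa [show k - 2 - 1 = k - 3 by omega] at this
      have hpf : (2:ℕ) ^ f ≤ 2 ^ (k - 3) := Nat.pow_le_pow_right (by norm_num) hfk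
      rcases Nat.eq_or_lt_of_le (show i ≤ k - 1 by omega) with rfl | hilt
      · -- a k = 2 * a (k-1) = 2^(k-1) + 2^(f+1)
        right
        refine ⟨f + 1, by omega, ?_⟩
        rw [hk', hB, pow_succ]
        omega
      · -- i ≤ k - 2 ; forced i = k - 2
        have hik : i = k - 2 := by
          by_contra hne
          have : i ≤ k - 3 := by omega
          have h5 : (2:ℕ) ^ i ≤ 2 ^ (k - 3) := Nat.pow_le_pow_right (by norm_num) this
          -- a i > 2^(k-2) - 2^f ≥ 2^(k-3)
          rw [hk', hB] at hak
          omega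
        subst hik
        rcases ih (k - 2) (by omega) (by omega) with hA2 | ⟨g, hg, hB2⟩
        · have hiv : a (k - 2) = 2 ^ (k - 2) := hA2 (k - 2) le_rfl
          right
          refine ⟨f, by omega, ?_⟩
          rw [hk', hB, hiv]
          omega
        · -- a (k-2) = 2^(k-3) + 2^g, g + 2 ≤ k - 2
          rw [show k - 2 - 1 = k - 3 by omega] at hB2
          have hgk : g ≤ k - 4 := by omega
          have hk4 : 4 ≤ k := by omega
          have hp3 : (2:ℕ) ^ (k - 3) = 2 ^ (k - 4) + 2 ^ (k - 4) := by
            have := two_pow_split (k := k - 3) (by omega)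
            rwa [show k - 3 - 1 = k - 4 by omega] at this
          have hpg : (2:ℕ) ^ g ≤ 2 ^ (k - 4) := Nat.pow_le_pow_right (by norm_num) hgk
          have hkv : a k = 2 ^ (k - 2) + 2 ^ f + (2 ^ (k - 3) + 2 ^ g) := by
            rw [hk', hB, hB2]; ring
          have hfv : f = k - 3 := by
            by_contra hne
            have : f ≤ k - 4 := by omega
            have h5 : (2:ℕ) ^ f ≤ 2 ^ (k - 4) := Nat.pow_le_pow_right (by norm_num) this
            rw [hkv] at hak
            omega
          subst hfv
          right
          refine ⟨g, by omega, ?_⟩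
          rw [hkv]
          omega

/-- The explicit chain 1, 2, 3, 6, 12, …, 3·2^(m+1), 3·2^(m+1)+1. -/
def cfun (m : ℕ) : ℕ → ℕ := fun k =>
  if k = 0 then 1 else if k = 1 then 2
  else if k ≤ m + 3 then 3 * 2 ^ (k - 2) else 3 * 2 ^ (m + 1) + 1

lemma cfun_zero (m : ℕ) : cfun m 0 = 1 := rfl

lemma cfun_one (m : ℕ) : cfun m 1 = 2 := rfl

lemma cfun_mid (m : ℕ) {k : ℕ} (h2 : 2 ≤ k) (h3 : k ≤ m + 3) :
    cfun m k = 3 * 2 ^ (k - 2) := by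
  simp only [cfun]
  rw [if_neg (by omega), if_neg (by omega), if_pos h3]

lemma cfun_top (m : ℕ) : cfun m (m + 4) = 3 * 2 ^ (m + 1) + 1 := by
  simp only [cfun]
  rw [if_neg (by omega), if_neg (by omega), if_neg (by omega)]

lemma cfun_chain (m : ℕ) : IsAdditionChain (m + 4) (cfun m) (3 * 2 ^ (m + 1) + 1) := by
  refine ⟨cfun_zero m, cfun_top m, ?_, ?_⟩
  · intro k hk
    rcases Nat.eq_zero_or_pos k with rfl | h0
    · rw [cfun_zero, show (0:ℕ)+1 = 1 from rfl, cfun_one]; omega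
    rcases Nat.eq_or_lt_of_le h0 with h1 | h1
    · rw [← h1, cfun_one, cfun_mid m (by omega) (by omega)]
      norm_num
    rcases Nat.lt_or_ge (k + 1) (m + 4) with h2 | h2
    · rw [cfun_mid m (by omega) (by omega), cfun_mid m (show 2 ≤ k+1 by omega) (by omega)]
      have hp : (2:ℕ) ^ (k - 2) < 2 ^ (k + 1 - 2) :=
        Nat.pow_lt_pow_right (by norm_num) (by omega)
      omega
    · have hk3 : k = m + 3 := by omega
      subst hk3
      rw [cfun_mid m (by omega) le_rfl, show m + 3 + 1 = m + 4 from rfl, cfun_top,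
        show m + 3 - 2 = m + 1 by omega]
      omega
  · intro k hk1 hkr
    rcases Nat.eq_or_lt_of_le hk1 with h1 | h1
    · exact ⟨0, 0, by omega, by omega, by rw [← h1, cfun_one, cfun_zero]⟩
    rcases Nat.eq_or_lt_of_le (show 2 ≤ k by omega) with h2 | h2
    · refine ⟨1, 0, by omega, by omega, ?_⟩
      rw [← h2, cfun_mid m le_rfl (by omega), cfun_one, cfun_zero]
      norm_num
    rcases Nat.lt_or_ge k (m + 4) with h3 | h3
    · -- doubling step: 3 ≤ k ≤ m + 3
      refine ⟨k - 1, k - 1, by omega, by omega, ?_⟩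
      rw [cfun_mid m (by omega) (by omega), cfun_mid m (show 2 ≤ k - 1 by omega) (by omega)]
      rw [show k - 2 = k - 1 - 2 + 1 by omega, pow_succ]
      ring
    · have hk4 : k = m + 4 := by omega
      subst hk4
      refine ⟨m + 3, 0, by omega, by omega, ?_⟩
      rw [cfun_top, cfun_mid m (by omega) le_rfl, cfun_zero,
        show m + 3 - 2 = m + 1 by omega]

theorem stmt9 (m : ℕ) (hm : 0 < m) : addLen (3 * 2 ^ (m + 1) + 1) = m + 4 := by
  have hmem : (m + 4) ∈ {r | ∃ a : ℕ → ℕ, IsAdditionChain r a (3 * 2 ^ (m + 1) + 1)} :=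
    ⟨cfun m, cfun_chain m⟩
  have hpow : (2:ℕ) ^ (m + 2) = 2 * 2 ^ (m + 1) := by rw [pow_succ]; ring
  have hpow1 : (1:ℕ) ≤ 2 ^ (m + 1) := Nat.one_le_two_pow
  have hlb : ∀ r ∈ {r | ∃ a : ℕ → ℕ, IsAdditionChain r a (3 * 2 ^ (m + 1) + 1)},
      m + 4 ≤ r := by
    rintro r ⟨a, ha⟩
    have hle : 3 * 2 ^ (m + 1) + 1 ≤ 2 ^ r := by
      have := chain_le_pow ha r le_rfl
      rw [ha.2.1] at this
      exact this
    have hr3 : m + 3 ≤ r := by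
      by_contra hc
      have : r ≤ m + 2 := by omega
      have : (2:ℕ) ^ r ≤ 2 ^ (m + 2) := Nat.pow_le_pow_right (by norm_num) this
      omega
    rcases Nat.eq_or_lt_of_le hr3 with hr | hr
    swap
    · omega
    -- r = m + 3 : contradiction via key
    exfalso
    subst hr
    have hn : 2 ^ (m + 3 - 1) < 3 * 2 ^ (m + 1) + 1 := by
      have : m + 3 - 1 = m + 2 := by omega
      rw [this, hpow]
      omega
    rcases key ha hn (m + 3) le_rfl with hA | ⟨e, he, hB⟩
    · have := hA (m + 3) le_rfl
      rw [ha.2.1] at this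
      have h8 : (2:ℕ) ^ (m + 3) = 4 * 2 ^ (m + 1) := by
        rw [pow_succ, pow_succ]; ring
      omega
    · rw [ha.2.1] at hB
      have hee : e ≤ m + 1 := by omega
      have h2e : (2:ℕ) ^ e ≤ 2 ^ (m + 1) := Nat.pow_le_pow_right (by norm_num) hee
      have h9 : m + 3 - 1 = m + 2 := by omega
      rw [h9, hpow] at hB
      omega
  exact le_antisymm (Nat.sInf_le hmem) (le_csInf ⟨_, hmem⟩ hlb)
end

section
/- For every positive integer m, setting c_1 = 5·2^{m+2} + 3 and c_2 = 3·2^{m+1} + 1, there exists an addition chain for c_1 of length m + 7 that contains c_2 as an element. -/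
/-- The explicit chain. -/
def chainA (m k : ℕ) : ℕ :=
  if k ≤ m + 2 then 2 ^ k
  else if k = m + 3 then 3 * 2 ^ (m + 1)
  else if k = m + 4 then 3 * 2 ^ (m + 1) + 1
  else if k = m + 5 then 6 * 2 ^ (m + 1) + 2
  else if k = m + 6 then 9 * 2 ^ (m + 1) + 3
  else 10 * 2 ^ (m + 1) + 3

lemma chainA_pow (m k : ℕ) (h : k ≤ m + 2) : chainA m k = 2 ^ k := if_pos h

lemma chainA_m3 (m : ℕ) : chainA m (m + 3) = 3 * 2 ^ (m + 1) := by
  unfold chainA; rw [if_neg (by omega), if_pos rfl]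

lemma chainA_m4 (m : ℕ) : chainA m (m + 4) = 3 * 2 ^ (m + 1) + 1 := by
  unfold chainA; rw [if_neg (by omega), if_neg (by omega), if_pos rfl]

lemma chainA_m5 (m : ℕ) : chainA m (m + 5) = 6 * 2 ^ (m + 1) + 2 := by
  unfold chainA; rw [if_neg (by omega), if_neg (by omega), if_neg (by omega), if_pos rfl]

lemma chainA_m6 (m : ℕ) : chainA m (m + 6) = 9 * 2 ^ (m + 1) + 3 := by
  unfold chainA
  rw [if_neg (by omega), if_neg (by omega), if_neg (by omega), if_neg (by omega), if_pos rfl]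

lemma chainA_m7 (m : ℕ) : chainA m (m + 7) = 10 * 2 ^ (m + 1) + 3 := by
  unfold chainA
  rw [if_neg (by omega), if_neg (by omega), if_neg (by omega), if_neg (by omega),
    if_neg (by omega)]

theorem stmt10 (m : ℕ) (hm : 0 < m) :
    ∃ a : ℕ → ℕ, IsAdditionChain (m + 7) a (5 * 2 ^ (m + 2) + 3) ∧
      ∃ i ≤ m + 7, a i = 3 * 2 ^ (m + 1) + 1 := by
  have hP : 2 ≤ 2 ^ (m + 1) := by
    calc 2 = 2 ^ 1 := rfl
    _ ≤ 2 ^ (m + 1) := Nat.pow_le_pow_right (by norm_num) (by omega)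
  refine ⟨chainA m, ⟨chainA_pow m 0 (by omega), ?_, ?_, ?_⟩, m + 4, by omega, chainA_m4 m⟩
  · rw [chainA_m7]; ring
  · intro k hk
    rcases Nat.lt_or_ge k (m + 2) with h | h
    · rw [chainA_pow m k (by omega), chainA_pow m (k + 1) (by omega)]
      exact Nat.pow_lt_pow_right (by norm_num) (by omega)
    · have : k = m + 2 ∨ k = m + 3 ∨ k = m + 4 ∨ k = m + 5 ∨ k = m + 6 := by omega
      rcases this with rfl | rfl | rfl | rfl | rfl
      · rw [chainA_pow m (m + 2) le_rfl, chainA_m3, pow_succ]; omega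
      · rw [chainA_m3, chainA_m4]; omega
      · rw [chainA_m4, chainA_m5]; omega
      · rw [chainA_m5, chainA_m6]; omega
      · rw [chainA_m6, chainA_m7]; omega
  · intro k hk1 hk2
    rcases Nat.lt_or_ge k (m + 3) with h | h
    · obtain ⟨j, rfl⟩ : ∃ j, k = j + 1 := ⟨k - 1, by omega⟩
      refine ⟨j, j, by omega, by omega, ?_⟩
      rw [chainA_pow m _ (by omega), chainA_pow m j (by omega), pow_succ]; ring
    · have : k = m + 3 ∨ k = m + 4 ∨ k = m + 5 ∨ k = m + 6 ∨ k = m + 7 := by omega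
      rcases this with rfl | rfl | rfl | rfl | rfl
      · exact ⟨m + 2, m + 1, by omega, by omega, by
          rw [chainA_m3, chainA_pow m _ le_rfl, chainA_pow m _ (by omega), pow_succ]; ring⟩
      · exact ⟨m + 3, 0, by omega, by omega, by
          rw [chainA_m4, chainA_m3, chainA_pow m 0 (by omega)]; ring⟩
      · exact ⟨m + 4, m + 4, by omega, by omega, by rw [chainA_m5, chainA_m4]; ring⟩
      · exact ⟨m + 5, m + 4, by omega, by omega, by rw [chainA_m6, chainA_m5, chainA_m4]; ring⟩
      · exact ⟨m + 6, m + 1, by omega, by omega, by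
          rw [chainA_m7, chainA_m6, chainA_pow m _ (by omega)]; ring⟩
end

section
/- For every positive integer m, with c_1 = 5·2^{m+2} + 3 and c_2 = 3·2^{m+1} + 1, there exists an addition chain for 2^{c_1} − 1 of length c_1 + m + 6 that contains 2^{c_2} − 1 as an element. -/
/-!
The chain is built from one move: if a chain ends at `2 ^ p - 1` and contains `2 ^ q - 1`, then
`q` doublings followed by one addition reach `2 ^ q (2 ^ p - 1) + (2 ^ q - 1) = 2 ^ (p + q) - 1`
in `q + 1` further steps, keeping all earlier elements. Starting from `1`, the move with `q = p`
doubles the exponent, which reaches `2 ^ t - 1` for `t = 2 ^ (m + 1)` in `t + m` steps. The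
exponents then run through `t, 2t, 3t, 3t + 1 = c₂, 2c₂, 3c₂, 3c₂ + t = c₁`, so `2 ^ c₂ - 1`
occurs, and the length is `(t + m) + 3(t + 1) + 2 + 2(c₂ + 1) = c₁ + m + 6`.
-/

open Function

theorem two_pow_mul_mersenne_add_mersenne (p q : ℕ) :
    2 ^ q * mersenne p + mersenne q = mersenne (p + q) := by
  apply Nat.add_right_cancel (m := 1)
  rw [add_assoc, succ_mersenne, succ_mersenne, ← mul_add_one, succ_mersenne, pow_add, mul_comm]

namespace IsAdditionChain

variable {r n : ℕ} {a : ℕ → ℕ}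

theorem pos (h : IsAdditionChain r a n) : ∀ k ≤ r, 0 < a k
  | 0, _ => h.1 ▸ Nat.one_pos
  | k + 1, hk => (h.pos k (by omega)).trans (h.2.2.1 k hk)

theorem one_mem (h : IsAdditionChain r a n) : ∃ i ≤ r, a i = 1 :=
  ⟨0, Nat.zero_le r, h.1⟩

theorem last_mem (h : IsAdditionChain r a n) : ∃ i ≤ r, a i = n :=
  ⟨r, le_rfl, h.2.1⟩

theorem exists_snoc (h : IsAdditionChain r a n) {j : ℕ} (hj : j ≤ r) :
    ∃ b, IsAdditionChain (r + 1) b (n + a j) ∧ ∀ k ≤ r, b k = a k := by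
  have hpos := h.pos j hj
  obtain ⟨h0, hr, hlt, hsum⟩ := h
  have agree : ∀ k ≤ r, update a (r + 1) (n + a j) k = a k :=
    fun k hk => update_of_ne (by omega) _ _
  refine ⟨update a (r + 1) (n + a j), ⟨?_, update_self .., fun k hk => ?_, fun k hk₁ hk₂ => ?_⟩,
    agree⟩
  · rw [agree 0 (Nat.zero_le r), h0]
  · rcases Nat.lt_or_eq_of_le (Nat.lt_succ_iff.1 hk) with hk | rfl
    · rw [agree k hk.le, agree (k + 1) hk]
      exact hlt k hk
    · rw [agree k le_rfl, update_self, hr]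
      exact Nat.lt_add_of_pos_right hpos
  · rcases Nat.lt_or_eq_of_le hk₂ with hk | rfl
    · obtain ⟨i, i', hi, hi', e⟩ := hsum k hk₁ (by omega)
      exact ⟨i, i', hi, hi', by rw [agree k (by omega), agree i (by omega), agree i' (by omega), e]⟩
    · exact ⟨r, j, by omega, by omega, by rw [update_self, agree r le_rfl, agree j hj, hr]⟩

theorem exists_two_pow_mul (h : IsAdditionChain r a n) (s : ℕ) :
    ∃ b, IsAdditionChain (r + s) b (2 ^ s * n) ∧ ∀ k ≤ r, b k = a k := by
  induction s with
  | zero => exact ⟨a, by simpa using h, fun _ _ => rfl⟩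
  | succ s ih =>
    obtain ⟨b, hb, hba⟩ := ih
    obtain ⟨c, hc, hcb⟩ := hb.exists_snoc le_rfl
    rw [hb.2.1, ← two_mul, ← mul_assoc, ← pow_succ'] at hc
    exact ⟨c, hc, fun k hk => (hcb k (by omega)).trans (hba k hk)⟩

theorem exists_mersenne_add {p q : ℕ} (h : IsAdditionChain r a (mersenne p))
    (hq : ∃ i ≤ r, a i = mersenne q) :
    ∃ b, IsAdditionChain (r + q + 1) b (mersenne (p + q)) ∧
      ∀ x, (∃ i ≤ r, a i = x) → ∃ i ≤ r + q + 1, b i = x := by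
  obtain ⟨i, hi, hai⟩ := hq
  obtain ⟨b, hb, hba⟩ := h.exists_two_pow_mul q
  obtain ⟨c, hc, hcb⟩ := hb.exists_snoc (j := i) (by omega)
  rw [hba i hi, hai, two_pow_mul_mersenne_add_mersenne] at hc
  refine ⟨c, hc, ?_⟩
  rintro x ⟨k, hk, rfl⟩
  exact ⟨k, by omega, by rw [hcb k (by omega), hba k hk]⟩

end IsAdditionChain

theorem exists_isAdditionChain_mersenne_two_pow (j : ℕ) :
    ∃ a, IsAdditionChain (2 ^ j + j - 1) a (mersenne (2 ^ j)) := by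
  induction j with
  | zero => exact ⟨fun _ => 1, rfl, rfl, by simp, fun k _ hk => by simp at hk; omega⟩
  | succ j ih =>
    obtain ⟨a, ha⟩ := ih
    obtain ⟨b, hb, -⟩ := ha.exists_mersenne_add ha.last_mem
    have hr : 2 ^ j + j - 1 + 2 ^ j + 1 = 2 ^ (j + 1) + (j + 1) - 1 := by
      have := Nat.one_le_two_pow (n := j)
      rw [pow_succ]
      omega
    rw [hr, ← two_mul, ← pow_succ'] at hb
    exact ⟨b, hb⟩

theorem stmt12_general (m : ℕ) :
    ∃ a : ℕ → ℕ,
      IsAdditionChain ((5 * 2 ^ (m + 2) + 3) + m + 6) a (2 ^ (5 * 2 ^ (m + 2) + 3) - 1) ∧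
      ∃ i ≤ (5 * 2 ^ (m + 2) + 3) + m + 6, a i = 2 ^ (3 * 2 ^ (m + 1) + 1) - 1 := by
  obtain ⟨a₀, h₀⟩ := exists_isAdditionChain_mersenne_two_pow (m + 1)
  obtain ⟨a₁, h₁, mem₁⟩ := h₀.exists_mersenne_add h₀.last_mem
  obtain ⟨a₂, h₂, mem₂⟩ := h₁.exists_mersenne_add (mem₁ _ h₀.last_mem)
  obtain ⟨a₃, h₃, mem₃⟩ := h₂.exists_mersenne_add (q := 1) h₂.one_mem
  obtain ⟨a₄, h₄, mem₄⟩ := h₃.exists_mersenne_add h₃.last_mem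
  obtain ⟨a₅, h₅, mem₅⟩ := h₄.exists_mersenne_add (mem₄ _ h₃.last_mem)
  obtain ⟨a₆, h₆, mem₆⟩ :=
    h₅.exists_mersenne_add (mem₅ _ (mem₄ _ (mem₃ _ (mem₂ _ (mem₁ _ h₀.last_mem)))))
  obtain ⟨i, hi, hai⟩ := mem₆ _ (mem₅ _ (mem₄ _ h₃.last_mem))
  have ht : 2 ^ (m + 2) = 2 * 2 ^ (m + 1) := by rw [pow_succ, mul_comm]
  unfold mersenne at h₆ hai
  refine ⟨a₆, ?_, i, by omega, by rw [hai]; congr 2; omega⟩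
  convert h₆ using 1
  · omega
  · congr 2
    omega

theorem stmt12 (m : ℕ) (hm : 0 < m) :
    ∃ a : ℕ → ℕ,
      IsAdditionChain ((5 * 2 ^ (m + 2) + 3) + m + 6) a (2 ^ (5 * 2 ^ (m + 2) + 3) - 1) ∧
      ∃ i ≤ (5 * 2 ^ (m + 2) + 3) + m + 6, a i = 2 ^ (3 * 2 ^ (m + 1) + 1) - 1 :=
  stmt12_general m
end
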